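/- arXiv:2001.00730 — 4 statements merged into one kernel-verified Lean document; each statement's English description precedes it below -/
import Mathlib

section
/- Let A₁ be an n×n signed bipartite adjacency matrix with parts of sizes s and n−s, let A₂ be an m×m signed adjacency matrix, and let 𝒜 = A₁⊗I_m + D⊗A₂ be the signed Cartesian product matrix, where D = diag(I_s, −I_{n−s}). Then the characteristic polynomial of 𝒜 equals the characteristic polynomial of −𝒜 if and only if n = 2s or the characteristic polynomial of A₂ equals the characteristic polynomial of −A₂; that is, the spectrum of the signed Cartesian product is symmetric if and only if the signed bipartite graph is balanced or the spectrum of A₂ is symmetric. -/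
/-!
For a real symmetric matrix `M`, `charpoly M = charpoly (-M)` holds iff `tr (M ^ k) = 0` for every
odd `k`: the traces of powers are the power sums of the eigenvalues, and by Newton's identities
these determine the elementary symmetric functions of the eigenvalues, i.e. the coefficients of
the characteristic polynomial.

Since `D` anticommutes with `A₁` and `D ^ 2 = 1`, the summands `X = A₁ ⊗ I` and `Y = D ⊗ A₂`
of `𝒜` anticommute. For odd `k`, `(X + Y) ^ k = (X ^ 2 + Y ^ 2) ^ ((k - 1) / 2) (X + Y)` expands
into terms `X ^ i Y ^ j` with `i + j = k`, and a mixed one has trace zero: cycling one factor `X`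
(or `Y`) around it flips its sign. Hence `tr (𝒜 ^ k) = m tr (A₁ ^ k) + tr D tr (A₂ ^ k)
= (s - t) tr (A₂ ^ k)`, as `tr (A₁ ^ k) = 0` by the same sign flip, now conjugating by `D`.
-/

open Matrix Kronecker Polynomial Finset

section PowerSums

variable {ι K : Type*} [Fintype ι] [Field K] [CharZero K]

theorem esymm_map_eq_of_sum_pow_eq {d e : ι → K} (h : ∀ k, ∑ i, d i ^ k = ∑ i, e i ^ k)
    (k : ℕ) : (univ.val.map d).esymm k = (univ.val.map e).esymm k := by
  classical
  induction k using Nat.strong_induction_on with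
  | _ k ih =>
    have newton (f : ι → K) : (k : K) * (univ.val.map f).esymm k = (-1) ^ (k + 1) *
        ∑ a ∈ antidiagonal k with a.1 < k, (-1) ^ a.1 * (univ.val.map f).esymm a.1 *
          ∑ i, f i ^ a.2 := by
      simpa only [map_mul, map_sum, map_pow, map_neg, map_one, map_natCast, MvPolynomial.psum,
        MvPolynomial.aeval_esymm_eq_multiset_esymm, MvPolynomial.aeval_X] using
        congrArg (MvPolynomial.aeval f) (MvPolynomial.mul_esymm_eq_sum ι K k)
    rcases eq_or_ne k 0 with rfl | hk
    · simp [Multiset.esymm]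
    refine mul_left_cancel₀ (Nat.cast_ne_zero.mpr hk) ?_
    rw [newton d, newton e]
    congr 1
    refine sum_congr rfl fun a ha => ?_
    rw [ih a.1 (mem_filter.mp ha).2, h a.2]

theorem prod_X_sub_C_eq_of_sum_pow_eq {d e : ι → K} (h : ∀ k, ∑ i, d i ^ k = ∑ i, e i ^ k) :
    ∏ i, (X - C (d i)) = ∏ i, (X - C (e i)) := by
  have hprod (f : ι → K) :
      ∏ i, (X - C (f i)) = ((univ.val.map f).map fun t => X - C t).prod := by
    rw [Multiset.map_map]
    rfl
  simp only [hprod, Multiset.prod_X_sub_X_eq_sum_esymm, Multiset.card_map,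
    esymm_map_eq_of_sum_pow_eq h]

end PowerSums

namespace Matrix.IsHermitian

variable {𝕜 n : Type*} [RCLike 𝕜] [Fintype n] [DecidableEq n] {A B : Matrix n n 𝕜}

theorem trace_pow (hA : A.IsHermitian) (k : ℕ) :
    (A ^ k).trace = ∑ i, (hA.eigenvalues i : 𝕜) ^ k := by
  conv_lhs => rw [hA.spectral_theorem, ← map_pow, Unitary.conjStarAlgAut_apply, trace_mul_cycle,
    Unitary.coe_star_mul_self, one_mul, diagonal_pow, trace_diagonal]
  rfl

theorem trace_pow_eq_sum_roots_charpoly (hA : A.IsHermitian) (k : ℕ) :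
    (A ^ k).trace = (A.charpoly.roots.map (· ^ k)).sum := by
  simp [hA.trace_pow, hA.roots_charpoly_eq_eigenvalues]

theorem charpoly_eq_iff_trace_pow_eq (hA : A.IsHermitian) (hB : B.IsHermitian) :
    A.charpoly = B.charpoly ↔ ∀ k, (A ^ k).trace = (B ^ k).trace := by
  refine ⟨fun h k => by rw [hA.trace_pow_eq_sum_roots_charpoly, h,
    hB.trace_pow_eq_sum_roots_charpoly], fun h => ?_⟩
  rw [hA.charpoly_eq, hB.charpoly_eq]
  exact prod_X_sub_C_eq_of_sum_pow_eq fun k => by rw [← hA.trace_pow, ← hB.trace_pow, h]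

theorem charpoly_eq_charpoly_neg_iff (hA : A.IsHermitian) :
    A.charpoly = (-A).charpoly ↔ ∀ k, Odd k → (A ^ k).trace = 0 := by
  rw [hA.charpoly_eq_iff_trace_pow_eq hA.neg]
  refine ⟨fun h k hk => ?_, fun h k => ?_⟩
  · rw [← CharZero.eq_neg_self_iff, ← trace_neg, ← hk.neg_pow, h]
  · rcases Nat.even_or_odd k with hk | hk
    · rw [hk.neg_pow]
    · rw [hk.neg_pow, trace_neg, h k hk, neg_zero]

end Matrix.IsHermitian

def Anticommute {R : Type*} [Mul R] [Neg R] (a b : R) : Prop := a * b = -(b * a)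

namespace Anticommute

section Ring

variable {R : Type*} [Ring R] {a b : R}

theorem symm (h : Anticommute a b) : Anticommute b a := by
  rw [Anticommute, h, neg_neg]

theorem commute_sq_right (h : Anticommute a b) : Commute a (b ^ 2) := by
  rw [Commute, SemiconjBy, pow_two, ← mul_assoc, h, neg_mul, mul_assoc, h, mul_neg, neg_neg,
    mul_assoc]

theorem pow_odd_right (h : Anticommute a b) {k : ℕ} (hk : Odd k) : Anticommute a (b ^ k) := by
  obtain ⟨j, rfl⟩ := hk
  rw [Anticommute, pow_succ, pow_mul, ← mul_assoc, (h.commute_sq_right.pow_right j).eq,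
    mul_assoc, h, mul_neg, mul_assoc]

theorem pow_odd_left (h : Anticommute a b) {k : ℕ} (hk : Odd k) : Anticommute (a ^ k) b :=
  (h.symm.pow_odd_right hk).symm

theorem add_sq (h : Anticommute a b) : (a + b) ^ 2 = a ^ 2 + b ^ 2 := by
  rw [pow_two, add_mul, mul_add, mul_add, h, pow_two, pow_two]
  abel

end Ring

section Trace

variable {n R : Type*} [Fintype n] [DecidableEq n] [CommRing R] [NoZeroDivisors R] [CharZero R]
  {X Y : Matrix n n R}

theorem trace_pow_succ_mul_eq_zero (h : Anticommute X Y) (k : ℕ) :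
    (X ^ (k + 1) * Y).trace = 0 := by
  rw [← CharZero.eq_neg_self_iff]
  calc (X ^ (k + 1) * Y).trace = (X ^ k * (Y * X)).trace := by
        rw [pow_succ', mul_assoc, trace_mul_comm, mul_assoc]
    _ = -(X ^ (k + 1) * Y).trace := by
        rw [h.symm, mul_neg, trace_neg, ← mul_assoc, ← pow_succ]

theorem trace_pow_mul_pow_odd_eq_zero (h : Anticommute X Y) {i j : ℕ} (hi : i ≠ 0)
    (hj : Odd j) : (X ^ i * Y ^ j).trace = 0 := by
  obtain ⟨i, rfl⟩ := Nat.exists_eq_succ_of_ne_zero hi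
  exact (h.pow_odd_right hj).trace_pow_succ_mul_eq_zero i

theorem trace_add_pow_odd (h : Anticommute X Y) {k : ℕ} (hk : Odd k) :
    ((X + Y) ^ k).trace = (X ^ k).trace + (Y ^ k).trace := by
  obtain ⟨e, rfl⟩ := hk
  have hXY : Commute (X ^ 2) (Y ^ 2) := h.commute_sq_right.pow_left 2
  have htrace_X (a b : ℕ) :
      ((X ^ 2) ^ a * (Y ^ 2) ^ b * X).trace = (Y ^ (2 * b) * X ^ (2 * a + 1)).trace := by
    rw [mul_assoc, trace_mul_comm, mul_assoc, ← pow_mul, ← pow_mul, ← pow_succ']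
  have htrace_Y (a b : ℕ) :
      ((X ^ 2) ^ a * (Y ^ 2) ^ b * Y).trace = (X ^ (2 * a) * Y ^ (2 * b + 1)).trace := by
    rw [mul_assoc, ← pow_mul, ← pow_mul, ← pow_succ]
  rw [pow_succ, pow_mul, h.add_sq, hXY.add_pow', sum_mul]
  simp only [smul_mul_assoc, mul_add, trace_sum, trace_smul, trace_add, sum_add_distrib,
    htrace_X, htrace_Y]
  congr 1
  · rw [sum_eq_single (e, 0)]
    · simp
    · rintro ⟨a, b⟩ hab hne
      rw [h.symm.trace_pow_mul_pow_odd_eq_zero _ (odd_two_mul_add_one a), smul_zero]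
      rw [HasAntidiagonal.mem_antidiagonal] at hab
      grind
    · simp
  · rw [sum_eq_single (0, e)]
    · simp
    · rintro ⟨a, b⟩ hab hne
      rw [h.trace_pow_mul_pow_odd_eq_zero _ (odd_two_mul_add_one b), smul_zero]
      rw [HasAntidiagonal.mem_antidiagonal] at hab
      grind
    · simp

end Trace

end Anticommute

namespace Matrix

variable {l m R : Type*}

theorem neg_kronecker [Mul R] [HasDistribNeg R] (A : Matrix l l R) (B : Matrix m m R) :
    (-A) ⊗ₖ B = -(A ⊗ₖ B) := by
  ext
  simp [kroneckerMap_apply]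

theorem IsSymm.kronecker [CommMagma R] {A : Matrix l l R} {B : Matrix m m R} (hA : A.IsSymm)
    (hB : B.IsSymm) : (A ⊗ₖ B).IsSymm := by
  rw [IsSymm, ← kroneckerMap_transpose, hA.eq, hB.eq]

variable [Fintype l] [Fintype m] [CommRing R]

theorem _root_.Anticommute.kronecker {A D : Matrix l l R} {B C : Matrix m m R}
    (hAD : Anticommute A D) (hBC : Commute B C) : Anticommute (A ⊗ₖ B) (D ⊗ₖ C) := by
  rw [Anticommute, ← mul_kronecker_mul, ← mul_kronecker_mul, hAD, hBC.eq, neg_kronecker]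

variable [DecidableEq l] [DecidableEq m]

theorem kronecker_pow (A : Matrix l l R) (B : Matrix m m R) (k : ℕ) :
    (A ⊗ₖ B) ^ k = (A ^ k) ⊗ₖ (B ^ k) := by
  induction k with
  | zero => simp
  | succ k ih => rw [pow_succ, ih, ← mul_kronecker_mul, ← pow_succ, ← pow_succ]

variable [NoZeroDivisors R] [CharZero R]

theorem _root_.Anticommute.trace_pow_odd_eq_zero {A D : Matrix l l R} (h : Anticommute A D)
    (hD : D * D = 1) {k : ℕ} (hk : Odd k) : (A ^ k).trace = 0 := by
  rw [← CharZero.eq_neg_self_iff]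
  calc (A ^ k).trace = (D * (A ^ k * D)).trace := by rw [trace_mul_comm, mul_assoc, hD, mul_one]
    _ = -(A ^ k).trace := by
      rw [← mul_assoc, (h.pow_odd_left hk).symm, neg_mul, trace_neg, mul_assoc, hD, mul_one]

theorem trace_kronecker_one_add_pow_odd {A D : Matrix l l R} (hAD : Anticommute A D)
    (hD : D * D = 1) (B : Matrix m m R) {k : ℕ} (hk : Odd k) :
    ((A ⊗ₖ (1 : Matrix m m R) + D ⊗ₖ B) ^ k).trace = D.trace * (B ^ k).trace := by
  have hDk : D ^ k = D := by
    obtain ⟨j, rfl⟩ := hk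
    rw [pow_succ, pow_mul, sq, hD, one_pow, one_mul]
  rw [(hAD.kronecker (Commute.one_left B)).trace_add_pow_odd hk, kronecker_pow, kronecker_pow,
    trace_kronecker, trace_kronecker, hAD.trace_pow_odd_eq_zero hD hk, zero_mul, zero_add, hDk]

end Matrix

theorem signed_cartesian_product_spectrum_symmetric_iff_general (s t m : ℕ)
    (P : Matrix (Fin s) (Fin t) ℝ)
    (A₂ : Matrix (Fin m) (Fin m) ℝ)
    (hA₂symm : A₂.IsSymm)
    (A₁ : Matrix (Fin s ⊕ Fin t) (Fin s ⊕ Fin t) ℝ)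
    (hA₁ : A₁ = Matrix.fromBlocks 0 P Pᵀ 0)
    (D : Matrix (Fin s ⊕ Fin t) (Fin s ⊕ Fin t) ℝ)
    (hD : D = Matrix.fromBlocks 1 0 0 (-1))
    (𝒜 : Matrix ((Fin s ⊕ Fin t) × Fin m) ((Fin s ⊕ Fin t) × Fin m) ℝ)
    (h𝒜 : 𝒜 = A₁ ⊗ₖ (1 : Matrix (Fin m) (Fin m) ℝ) + D ⊗ₖ A₂) :
    𝒜.charpoly = (-𝒜).charpoly ↔ (s + t = 2 * s ∨ A₂.charpoly = (-A₂).charpoly) := by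
  have hA₁D : Anticommute A₁ D := by
    simp [hA₁, hD, Anticommute, fromBlocks_multiply, fromBlocks_neg]
  have hDD : D * D = 1 := by simp [hD, fromBlocks_multiply, fromBlocks_one]
  have hD_trace : D.trace = s - t := by simp [hD, trace, Fintype.sum_sum_type, sub_eq_add_neg]
  have h𝒜symm : 𝒜.IsSymm := by
    rw [h𝒜, hA₁, hD]
    exact ((IsSymm.fromBlocks isSymm_zero rfl isSymm_zero).kronecker isSymm_one).add
      ((IsSymm.fromBlocks isSymm_one rfl isSymm_one.neg).kronecker hA₂symm)
  have htrace (k : ℕ) (hk : Odd k) : (𝒜 ^ k).trace = (s - t) * (A₂ ^ k).trace := by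
    rw [h𝒜, trace_kronecker_one_add_pow_odd hA₁D hDD A₂ hk, hD_trace]
  have hbalanced : s + t = 2 * s ↔ (s - t : ℝ) = 0 := by
    rw [sub_eq_zero]
    norm_cast
    omega
  rw [(isHermitian_iff_isSymm.mpr h𝒜symm).charpoly_eq_charpoly_neg_iff,
    (isHermitian_iff_isSymm.mpr hA₂symm).charpoly_eq_charpoly_neg_iff, hbalanced]
  by_cases hst : (s - t : ℝ) = 0 <;> simp +contextual [htrace, hst]

/-- The spectrum of the signed Cartesian product `𝒜 = A₁ ⊗ I_m + D ⊗ A₂` of a signed bipartite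
adjacency matrix `A₁` (parts of sizes `s` and `t = n − s`) and a signed adjacency matrix `A₂`
is symmetric (i.e. `charpoly 𝒜 = charpoly (−𝒜)`) if and only if the bipartition is balanced
(`n = 2s`) or the spectrum of `A₂` is symmetric. -/
theorem signed_cartesian_product_spectrum_symmetric_iff (s t m : ℕ)
    (P : Matrix (Fin s) (Fin t) ℝ)
    (hP : ∀ i j, P i j = -1 ∨ P i j = 0 ∨ P i j = 1)
    (A₂ : Matrix (Fin m) (Fin m) ℝ)
    (hA₂symm : A₂.IsSymm) (hA₂diag : ∀ i, A₂ i i = 0)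
    (hA₂ent : ∀ i j, A₂ i j = -1 ∨ A₂ i j = 0 ∨ A₂ i j = 1)
    (A₁ : Matrix (Fin s ⊕ Fin t) (Fin s ⊕ Fin t) ℝ)
    (hA₁ : A₁ = Matrix.fromBlocks 0 P Pᵀ 0)
    (D : Matrix (Fin s ⊕ Fin t) (Fin s ⊕ Fin t) ℝ)
    (hD : D = Matrix.fromBlocks 1 0 0 (-1))
    (𝒜 : Matrix ((Fin s ⊕ Fin t) × Fin m) ((Fin s ⊕ Fin t) × Fin m) ℝ)
    (h𝒜 : 𝒜 = A₁ ⊗ₖ (1 : Matrix (Fin m) (Fin m) ℝ) + D ⊗ₖ A₂) :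
    𝒜.charpoly = (-𝒜).charpoly ↔ (s + t = 2 * s ∨ A₂.charpoly = (-A₂).charpoly) :=
  signed_cartesian_product_spectrum_symmetric_iff_general s t m P A₂ hA₂symm A₁ hA₁ D hD 𝒜 h𝒜
end

section
/- Let A₁ be an n×n signed bipartite adjacency matrix with parts of sizes s and n−s, let A₂ be an m×m signed adjacency matrix, and let 𝒜' = (A₁+D)⊗A₂ be the signed semi-strong product matrix, where D = diag(I_s, −I_{n−s}). Then the characteristic polynomial of 𝒜' equals the characteristic polynomial of −𝒜' if and only if n = 2s or the characteristic polynomial of A₂ equals the characteristic polynomial of −A₂; that is, the spectrum of the signed semi-strong product is symmetric if and only if the signed bipartite graph is balanced or the spectrum of A₂ is symmetric. -/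
open Matrix Kronecker Polynomial

section Helpers

variable {n : Type*} [Fintype n] [DecidableEq n]

private lemma my_charpoly_conj {R : Type*} [CommRing R] (U M V : Matrix n n R)
    (hUV : U * V = 1) : (U * M * V).charpoly = M.charpoly := by
  have h1 : (C.mapMatrix U) * (C.mapMatrix V) = (1 : Matrix n n R[X]) := by
    rw [← _root_.map_mul, hUV, _root_.map_one]
  have hmap : (U * M * V).charmatrix
      = (C.mapMatrix U) * M.charmatrix * (C.mapMatrix V) := by
    rw [charmatrix, charmatrix, _root_.map_mul, _root_.map_mul]
    rw [mul_sub, sub_mul]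
    congr 1
    rw [mul_assoc, scalar_commute (X : R[X]) (Commute.all _) (C.mapMatrix V), ← mul_assoc, h1,
      one_mul]
  have h2 : (C.mapMatrix U).det * (C.mapMatrix V).det = 1 := by
    rw [← det_mul, h1, det_one]
  rw [Matrix.charpoly, hmap, det_mul, det_mul, Matrix.charpoly]
  rw [mul_comm, ← mul_assoc, mul_comm ((C.mapMatrix V).det) _, h2, one_mul]

private lemma my_charpoly_diagonal {R : Type*} [CommRing R] (d : n → R) :
    (diagonal d).charpoly = ∏ i, (X - C (d i)) := by
  rw [Matrix.charpoly]
  have : (diagonal d).charmatrix = diagonal fun i => X - C (d i) := by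
    ext i j
    by_cases h : i = j
    · subst h; simp [charmatrix_apply_eq]
    · simp [charmatrix_apply_ne _ _ _ h, diagonal_apply_ne _ h]
  rw [this, det_diagonal]

private lemma my_charpoly_unitary_diag (U : Matrix n n ℝ) (hUV : U * star U = 1) (f : n → ℝ) :
    (U * diagonal f * star U).charpoly = ∏ i, (X - C (f i)) := by
  rw [my_charpoly_conj _ _ _ hUV, my_charpoly_diagonal]

private lemma my_spectral (A : Matrix n n ℝ) (hA : A.IsHermitian) :
    A = (hA.eigenvectorUnitary : Matrix n n ℝ) * diagonal hA.eigenvalues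
      * star (hA.eigenvectorUnitary : Matrix n n ℝ) := by
  have := hA.spectral_theorem
  simpa using this

private lemma my_kron_smul_charpoly {κ : Type*} [Fintype κ] [DecidableEq κ]
    (B : Matrix n n ℝ) (Cm : Matrix κ κ ℝ) (hB : B.IsHermitian) (hC : Cm.IsHermitian) (c : ℝ) :
    (c • (B ⊗ₖ Cm)).charpoly
      = ∏ p : n × κ, (X - C (c * (hB.eigenvalues p.1 * hC.eigenvalues p.2))) := by
  set U₁ : Matrix n n ℝ := (hB.eigenvectorUnitary : Matrix n n ℝ)
  set U₂ : Matrix κ κ ℝ := (hC.eigenvectorUnitary : Matrix κ κ ℝ)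
  have h1 : U₁ * star U₁ = 1 := (Matrix.mem_unitaryGroup_iff).mp (hB.eigenvectorUnitary).2
  have h2 : U₂ * star U₂ = 1 := (Matrix.mem_unitaryGroup_iff).mp (hC.eigenvectorUnitary).2
  have hstar : star (U₁ ⊗ₖ U₂) = star U₁ ⊗ₖ star U₂ := by
    rw [Matrix.star_eq_conjTranspose, Matrix.star_eq_conjTranspose, Matrix.star_eq_conjTranspose,
      conjTranspose_eq_transpose_of_trivial, conjTranspose_eq_transpose_of_trivial,
      conjTranspose_eq_transpose_of_trivial, kroneckerMap_transpose]
  have hUV : (U₁ ⊗ₖ U₂) * star (U₁ ⊗ₖ U₂) = 1 := by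
    rw [hstar, ← mul_kronecker_mul, h1, h2, one_kronecker_one]
  have hdecomp : c • (B ⊗ₖ Cm) = (U₁ ⊗ₖ U₂) *
      diagonal (fun p : n × κ => c * (hB.eigenvalues p.1 * hC.eigenvalues p.2)) *
      star (U₁ ⊗ₖ U₂) := by
    conv_lhs => rw [my_spectral B hB, my_spectral Cm hC]
    rw [mul_kronecker_mul, mul_kronecker_mul, diagonal_kronecker_diagonal, hstar]
    rw [← smul_mul_assoc, ← mul_smul_comm, ← diagonal_smul]
    congr 2
  rw [hdecomp, my_charpoly_unitary_diag _ hUV]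

private lemma my_smul_charpoly (A : Matrix n n ℝ) (hA : A.IsHermitian) (c : ℝ) :
    (c • A).charpoly = ∏ i, (X - C (c * hA.eigenvalues i)) := by
  have hUV : (hA.eigenvectorUnitary : Matrix n n ℝ)
      * star (hA.eigenvectorUnitary : Matrix n n ℝ) = 1 :=
    (Matrix.mem_unitaryGroup_iff).mp (hA.eigenvectorUnitary).2
  have hd : c • A = (hA.eigenvectorUnitary : Matrix n n ℝ)
      * diagonal (fun i => c * hA.eigenvalues i)
      * star (hA.eigenvectorUnitary : Matrix n n ℝ) := by
    conv_lhs => rw [my_spectral A hA]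
    rw [← smul_mul_assoc, ← mul_smul_comm, ← diagonal_smul]
    congr 2
  rw [hd, my_charpoly_unitary_diag _ hUV]

private lemma my_schur (s t : ℕ) (P : Matrix (Fin s) (Fin t) ℝ) :
    (fromBlocks (1 : Matrix (Fin s) (Fin s) ℝ) P Pᵀ (-1)).charpoly * (X - C 1) ^ t
      = (X - C 1) ^ s *
        (((X ^ 2 - 1 : ℝ[X]) • (1 : Matrix (Fin t) (Fin t) ℝ[X])) - (Pᵀ * P).map C).det := by
  set K := FractionRing (Polynomial ℝ)
  set φ : ℝ[X] →+* K := (algebraMap ℝ[X] K : ℝ[X] →+* K) with hφ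
  have hinj : Function.Injective φ := IsFractionRing.injective ℝ[X] K
  apply hinj
  have ha0 : φ (X - C 1) ≠ 0 := by
    rw [map_ne_zero_iff φ hinj]
    exact X_sub_C_ne_zero 1
  set a : K := φ (X - C 1) with hadef
  set b : K := φ (X + C 1) with hbdef
  set Q : Matrix (Fin s) (Fin t) K := P.map (fun r => φ (C r)) with hQ
  have hcm1 : charmatrix (1 : Matrix (Fin s) (Fin s) ℝ) = (X - C 1 : ℝ[X]) • 1 := by
    ext i j
    by_cases h : i = j
    · subst h; simp [charmatrix_apply_eq]
    · simp [charmatrix_apply_ne _ _ _ h, Matrix.one_apply_ne h]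
  have hcm2 : charmatrix (-1 : Matrix (Fin t) (Fin t) ℝ) = (X + C 1 : ℝ[X]) • 1 := by
    ext i j
    by_cases h : i = j
    · subst h; simp [charmatrix_apply_eq]
    · simp [charmatrix_apply_ne _ _ _ h, Matrix.one_apply_ne h]
  have hsm : ∀ (k : ℕ) (p : ℝ[X]), ((p • (1 : Matrix (Fin k) (Fin k) ℝ[X])).map φ)
      = φ p • (1 : Matrix (Fin k) (Fin k) K) := by
    intro k p
    ext i j
    by_cases h : i = j
    · subst h; simp
    · simp [Matrix.one_apply_ne h, Matrix.map_apply, h]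
  have hmapmat : (charmatrix (fromBlocks (1 : Matrix (Fin s) (Fin s) ℝ) P Pᵀ (-1))).map φ
      = fromBlocks (a • 1) (-Q) (-Qᵀ) (b • 1) := by
    rw [charmatrix_fromBlocks, fromBlocks_map, hcm1, hcm2, hsm, hsm]
    ext i j
    cases i <;> cases j <;>
      simp [hadef, hbdef, hQ, Matrix.map_apply, Matrix.transpose_apply, Matrix.smul_apply,
        Matrix.one_apply, map_sub, map_add, _root_.map_one]
  letI : Invertible ((a • 1) : Matrix (Fin s) (Fin s) K) :=
    ⟨a⁻¹ • 1, by rw [Matrix.smul_mul, Matrix.one_mul, smul_smul, inv_mul_cancel₀ ha0, one_smul],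
      by rw [Matrix.smul_mul, Matrix.one_mul, smul_smul, mul_inv_cancel₀ ha0, one_smul]⟩
  have hinv : (⅟((a • 1) : Matrix (Fin s) (Fin s) K)) = a⁻¹ • 1 :=
    invOf_eq_right_inv (by
      rw [Matrix.smul_mul, Matrix.one_mul, smul_smul, mul_inv_cancel₀ ha0, one_smul])
  rw [_root_.map_mul, _root_.map_mul, map_pow, map_pow, Matrix.charpoly, RingHom.map_det,
    RingHom.mapMatrix_apply, hmapmat, det_fromBlocks₁₁, hinv]
  have hscomp : ((b • 1) - (-Qᵀ) * (a⁻¹ • (1 : Matrix (Fin s) (Fin s) K)) * (-Q))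
      = b • 1 - a⁻¹ • (Qᵀ * Q) := by
    rw [Matrix.mul_smul, Matrix.mul_one, Matrix.smul_mul]
    congr 1
    rw [Matrix.neg_mul, Matrix.mul_neg, neg_neg]
  rw [hscomp, det_smul, det_one, mul_one]
  have hcard : (Fintype.card (Fin s)) = s := Fintype.card_fin s
  rw [hcard]
  have hdet2 : a ^ t * (b • (1 : Matrix (Fin t) (Fin t) K) - a⁻¹ • (Qᵀ * Q)).det
      = ((a * b) • (1 : Matrix (Fin t) (Fin t) K) - Qᵀ * Q).det := by
    have h := det_smul (b • (1 : Matrix (Fin t) (Fin t) K) - a⁻¹ • (Qᵀ * Q)) a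
    rw [Fintype.card_fin] at h
    rw [← h]
    congr 1
    rw [smul_sub, smul_smul, smul_smul, mul_inv_cancel₀ ha0, one_smul]
  have hRHS : (((X ^ 2 - 1 : ℝ[X]) • (1 : Matrix (Fin t) (Fin t) ℝ[X])
      - (Pᵀ * P).map C).map φ) = (a * b) • (1 : Matrix (Fin t) (Fin t) K) - Qᵀ * Q := by
    have hab : a * b = φ (X ^ 2 - 1) := by
      rw [hadef, hbdef, ← _root_.map_mul]
      congr 1
      have hC1 : (C 1 : ℝ[X]) = 1 := map_one C
      rw [hC1]
      ring
    ext i j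
    by_cases h : i = j
    · subst h
      simp [Matrix.map_apply, Matrix.sub_apply, Matrix.smul_apply, Matrix.one_apply_eq, hab,
        Matrix.mul_apply, hQ, map_sum, _root_.map_mul, Matrix.transpose_apply]
    · simp [Matrix.map_apply, Matrix.sub_apply, Matrix.smul_apply, Matrix.one_apply_ne h, hab,
        Matrix.mul_apply, hQ, map_sum, _root_.map_mul, Matrix.transpose_apply, h]
  rw [RingHom.map_det, RingHom.mapMatrix_apply, hRHS, ← hdet2]
  ring

private lemma my_q_even (t : ℕ) (N : Matrix (Fin t) (Fin t) ℝ) :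
    aeval (-X : ℝ[X]) (((X ^ 2 - 1 : ℝ[X]) • (1 : Matrix (Fin t) (Fin t) ℝ[X]) - N.map C).det)
      = ((X ^ 2 - 1 : ℝ[X]) • (1 : Matrix (Fin t) (Fin t) ℝ[X]) - N.map C).det := by
  set ψ : ℝ[X] →+* ℝ[X] := (aeval (-X : ℝ[X]) : ℝ[X] →ₐ[ℝ] ℝ[X]).toRingHom with hψ
  show ψ _ = _
  rw [RingHom.map_det, RingHom.mapMatrix_apply]
  congr 1
  ext i j
  by_cases h : i = j
  · subst h
    simp [hψ, Matrix.map_apply, Matrix.sub_apply, Matrix.smul_apply, Matrix.one_apply_eq,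
      map_sub, _root_.map_one, map_pow, aeval_X, neg_sq, aeval_C, Polynomial.algebraMap_eq]
  · simp [hψ, Matrix.map_apply, Matrix.sub_apply, Matrix.smul_apply, Matrix.one_apply_ne h,
      map_sub, aeval_C, Polynomial.algebraMap_eq]

private lemma my_even_roots (q : ℝ[X]) (hq0 : q ≠ 0) (hqe : aeval (-X : ℝ[X]) q = q) :
    q.roots.map (fun x => -x) = q.roots := by
  have key : ∀ r : ℝ, q.rootMultiplicity r ≤ q.rootMultiplicity (-r) := by
    intro r
    rw [Polynomial.le_rootMultiplicity_iff hq0]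
    set n := q.rootMultiplicity r with hn
    have hdvd : (X - C r) ^ n ∣ q := q.pow_rootMultiplicity_dvd r
    have h2 := map_dvd (aeval (-X : ℝ[X])) hdvd
    rw [hqe] at h2
    have h3 : (aeval (-X : ℝ[X])) ((X - C r) ^ n) = (-1) ^ n * (X - C (-r)) ^ n := by
      rw [map_pow, map_sub, aeval_X, aeval_C]
      have h4 : (algebraMap ℝ ℝ[X]) r = C r := rfl
      rw [h4, map_neg, ← mul_pow]
      congr 1
      ring
    rw [h3] at h2
    obtain ⟨c, hc⟩ := h2
    exact ⟨(-1) ^ n * c, by rw [hc]; ring⟩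
  have keyeq : ∀ r : ℝ, q.rootMultiplicity (-r) = q.rootMultiplicity r := by
    intro r
    refine le_antisymm ?_ (key r)
    have := key (-r)
    rwa [neg_neg] at this
  classical
  ext a
  have h1 : (q.roots.map fun x => -x).count a = q.roots.count (-a) := by
    conv_lhs => rw [show a = -(-a) by rw [neg_neg]]
    exact Multiset.count_map_eq_count' _ _ neg_injective _
  rw [h1, count_roots, count_roots, keyeq]

private def pms (L M : Multiset ℝ) : Multiset ℝ := L.bind fun a => M.map (a * ·)

private lemma pms_add (L₁ L₂ M : Multiset ℝ) : pms (L₁ + L₂) M = pms L₁ M + pms L₂ M :=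
  Multiset.add_bind _ _ _

private lemma pms_replicate_one (k : ℕ) (M : Multiset ℝ) :
    pms (Multiset.replicate k 1) M = k • M := by
  induction k with
  | zero => simp [pms]
  | succ k ih =>
      rw [Multiset.replicate_succ, pms, Multiset.cons_bind, ← pms, ih, succ_nsmul']
      congr 1
      rw [Multiset.map_congr rfl fun x _ => one_mul x, Multiset.map_id']

private lemma pms_map_neg_right (L M : Multiset ℝ) :
    pms L (M.map fun x => -x) = (pms L M).map fun x => -x := by
  rw [pms, pms, Multiset.map_bind]
  refine Multiset.bind_congr fun a _ => ?_
  rw [Multiset.map_map, Multiset.map_map]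
  exact Multiset.map_congr rfl fun x _ => by simp [mul_neg]

private lemma pms_map_neg_left (L M : Multiset ℝ) :
    pms (L.map fun x => -x) M = (pms L M).map fun x => -x := by
  rw [pms, Multiset.bind_map, pms, Multiset.map_bind]
  refine Multiset.bind_congr fun a _ => ?_
  rw [Multiset.map_map]
  exact Multiset.map_congr rfl fun x _ => by simp [neg_mul, mul_neg]

private lemma my_core (sn tn : ℕ) (M M' T T' W : Multiset ℝ)
    (E1 : T + tn • M = sn • M + W) (E2 : T' + tn • M' = sn • M' + W) :
    T = T' ↔ (sn = tn ∨ M = M') := by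
  constructor
  · intro h
    by_cases hst : sn = tn
    · exact Or.inl hst
    · right
      ext a
      have d1 := congrArg (Multiset.count a) E1
      have d2 := congrArg (Multiset.count a) E2
      have dh := congrArg (Multiset.count a) h
      simp only [Multiset.count_add, Multiset.count_nsmul] at d1 d2 dh
      zify at d1 d2 dh
      have hz : ((tn : ℤ) - sn) * ((M.count a : ℤ) - (M'.count a : ℤ)) = 0 := by
        linear_combination d1 - d2 - dh
      rcases mul_eq_zero.mp hz with h0 | h0
      · exfalso
        apply hst
        have : (sn : ℤ) = tn := by linarith
        exact_mod_cast this
      · have : ((M.count a : ℤ)) = (M'.count a : ℤ) := by linarith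
        exact_mod_cast this
  · rintro (h | h)
    · subst h
      have hT : sn • M + T = sn • M + W := by rw [← E1]; ac_rfl
      have hT' : sn • M' + T' = sn • M' + W := by rw [← E2]; ac_rfl
      rw [add_left_cancel hT, add_left_cancel hT']
    · subst h
      have : T + tn • M = T' + tn • M := by rw [E1, E2]
      have h2 : tn • M + T = tn • M + T' := by
        rw [show tn • M + T = T + tn • M by ac_rfl, this]; ac_rfl
      exact add_left_cancel h2

private lemma prod_X_sub_C_inj (u v : Multiset ℝ) :
    (u.map fun r => X - C r).prod = (v.map fun r => X - C r).prod ↔ u = v := by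
  constructor
  · intro h
    have := congrArg Polynomial.roots h
    rwa [roots_multiset_prod_X_sub_C, roots_multiset_prod_X_sub_C] at this
  · rintro rfl; rfl

private lemma my_T_eq {ι κ : Type*} [Fintype ι] [Fintype κ] (f : ι → ℝ) (g : κ → ℝ) :
    (Finset.univ.val.map (fun p : ι × κ => f p.1 * g p.2))
      = pms (Finset.univ.val.map f) (Finset.univ.val.map g) := by
  rw [pms, Multiset.bind_map]
  rw [show (Finset.univ : Finset (ι × κ)).val = (Finset.univ ×ˢ Finset.univ).val by
    rw [Finset.univ_product_univ]]
  rw [Finset.product_val]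
  show ((Finset.univ.val.bind fun a => Finset.univ.val.map (Prod.mk a)).map _) = _
  rw [Multiset.map_bind]
  refine Multiset.bind_congr fun a _ => ?_
  rw [Multiset.map_map, Multiset.map_map]
  rfl

end Helpers

/-- The spectrum of the signed semi-strong product `𝒜' = (A₁ + D) ⊗ A₂` of a signed bipartite
adjacency matrix `A₁` (parts of sizes `s` and `t = n − s`) and a signed adjacency matrix `A₂`
is symmetric (i.e. `charpoly 𝒜' = charpoly (−𝒜')`) if and only if the bipartition is balanced
(`n = 2s`) or the spectrum of `A₂` is symmetric. -/
theorem signed_semi_strong_product_spectrum_symmetric_iff (s t m : ℕ)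
    (P : Matrix (Fin s) (Fin t) ℝ)
    (hP : ∀ i j, P i j = -1 ∨ P i j = 0 ∨ P i j = 1)
    (A₂ : Matrix (Fin m) (Fin m) ℝ)
    (hA₂symm : A₂.IsSymm) (hA₂diag : ∀ i, A₂ i i = 0)
    (hA₂ent : ∀ i j, A₂ i j = -1 ∨ A₂ i j = 0 ∨ A₂ i j = 1)
    (A₁ : Matrix (Fin s ⊕ Fin t) (Fin s ⊕ Fin t) ℝ)
    (hA₁ : A₁ = Matrix.fromBlocks 0 P Pᵀ 0)
    (D : Matrix (Fin s ⊕ Fin t) (Fin s ⊕ Fin t) ℝ)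
    (hD : D = Matrix.fromBlocks 1 0 0 (-1))
    (𝒜' : Matrix ((Fin s ⊕ Fin t) × Fin m) ((Fin s ⊕ Fin t) × Fin m) ℝ)
    (h𝒜' : 𝒜' = (A₁ + D) ⊗ₖ A₂) :
    𝒜'.charpoly = (-𝒜').charpoly ↔ (s + t = 2 * s ∨ A₂.charpoly = (-A₂).charpoly) := by
  classical
  subst hA₁ hD h𝒜'
  set B : Matrix (Fin s ⊕ Fin t) (Fin s ⊕ Fin t) ℝ :=
    Matrix.fromBlocks 0 P Pᵀ 0 + Matrix.fromBlocks 1 0 0 (-1) with hB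
  have hBform : B = fromBlocks 1 P Pᵀ (-1) := by
    rw [hB, fromBlocks_add]
    norm_num
  have hBH : B.IsHermitian := by
    rw [Matrix.IsHermitian, conjTranspose_eq_transpose_of_trivial, hBform, fromBlocks_transpose]
    simp
  have hA₂H : A₂.IsHermitian := by
    rw [Matrix.IsHermitian, conjTranspose_eq_transpose_of_trivial]
    exact hA₂symm
  set lam : (Fin s ⊕ Fin t) → ℝ := hBH.eigenvalues with hlam
  set mu : Fin m → ℝ := hA₂H.eigenvalues with hmu
  set Λ : Multiset ℝ := Finset.univ.val.map lam with hΛ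
  set M : Multiset ℝ := Finset.univ.val.map mu with hM
  set T : Multiset ℝ :=
    Finset.univ.val.map (fun p : (Fin s ⊕ Fin t) × Fin m => lam p.1 * mu p.2) with hT
  -- charpoly of the Kronecker product and its negative
  have hA1 : (B ⊗ₖ A₂).charpoly = (T.map fun r => X - C r).prod := by
    have h := my_kron_smul_charpoly B A₂ hBH hA₂H 1
    rw [one_smul] at h
    rw [h, Finset.prod_eq_multiset_prod, hT, Multiset.map_map]
    refine congrArg Multiset.prod (Multiset.map_congr rfl fun p _ => ?_)
    simp [Function.comp, hlam, hmu]
  have hA2 : (-(B ⊗ₖ A₂)).charpoly = ((T.map fun x => -x).map fun r => X - C r).prod := by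
    have h := my_kron_smul_charpoly B A₂ hBH hA₂H (-1)
    rw [neg_one_smul] at h
    rw [h, Finset.prod_eq_multiset_prod, hT, Multiset.map_map, Multiset.map_map]
    refine congrArg Multiset.prod (Multiset.map_congr rfl fun p _ => ?_)
    simp [Function.comp, hlam, hmu]
  have equivA : (B ⊗ₖ A₂).charpoly = (-(B ⊗ₖ A₂)).charpoly ↔ T = T.map (fun x => -x) := by
    rw [hA1, hA2, prod_X_sub_C_inj]
  -- charpoly of A₂ and its negative
  have hA21 : A₂.charpoly = (M.map fun r => X - C r).prod := by
    have h := my_smul_charpoly A₂ hA₂H 1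
    rw [one_smul] at h
    rw [h, Finset.prod_eq_multiset_prod, hM, Multiset.map_map]
    refine congrArg Multiset.prod (Multiset.map_congr rfl fun p _ => ?_)
    simp [Function.comp, hmu]
  have hA22 : (-A₂).charpoly = ((M.map fun x => -x).map fun r => X - C r).prod := by
    have h := my_smul_charpoly A₂ hA₂H (-1)
    rw [neg_one_smul] at h
    rw [h, Finset.prod_eq_multiset_prod, hM, Multiset.map_map, Multiset.map_map]
    refine congrArg Multiset.prod (Multiset.map_congr rfl fun p _ => ?_)
    simp [Function.comp, hmu]
  have equivB : A₂.charpoly = (-A₂).charpoly ↔ M = M.map (fun x => -x) := by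
    rw [hA21, hA22, prod_X_sub_C_inj]
  -- charpoly of B
  have hB1 : B.charpoly = (Λ.map fun r => X - C r).prod := by
    have h := my_smul_charpoly B hBH 1
    rw [one_smul] at h
    rw [h, Finset.prod_eq_multiset_prod, hΛ, Multiset.map_map]
    refine congrArg Multiset.prod (Multiset.map_congr rfl fun p _ => ?_)
    simp [Function.comp, hlam]
  -- Schur identity and root multiset structure
  set q : ℝ[X] :=
    (((X ^ 2 - 1 : ℝ[X]) • (1 : Matrix (Fin t) (Fin t) ℝ[X])) - (Pᵀ * P).map C).det with hq
  have hid : B.charpoly * (X - C 1) ^ t = (X - C 1) ^ s * q := by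
    rw [hBform]; exact my_schur s t P
  have hlhs0 : B.charpoly * (X - C 1) ^ t ≠ 0 :=
    mul_ne_zero (B.charpoly_monic.ne_zero) (pow_ne_zero _ (X_sub_C_ne_zero 1))
  have hrhs0 : (X - C 1 : ℝ[X]) ^ s * q ≠ 0 := by rw [← hid]; exact hlhs0
  have hq0 : q ≠ 0 := right_ne_zero_of_mul hrhs0
  have hroots : Λ + Multiset.replicate t 1 = Multiset.replicate s 1 + q.roots := by
    have hro := congrArg Polynomial.roots hid
    rw [Polynomial.roots_mul hlhs0, Polynomial.roots_mul hrhs0, Polynomial.roots_pow,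
      Polynomial.roots_pow, Polynomial.roots_X_sub_C, hB1,
      roots_multiset_prod_X_sub_C, Multiset.nsmul_singleton, Multiset.nsmul_singleton] at hro
    exact hro
  set W₀ : Multiset ℝ := q.roots with hW₀
  have hW₀sym : W₀.map (fun x => -x) = W₀ := my_even_roots q hq0 (by rw [hq]; exact my_q_even t _)
  -- product multisets
  have hTeq : T = pms Λ M := my_T_eq lam mu
  set M' : Multiset ℝ := M.map (fun x => -x) with hM'
  set T' : Multiset ℝ := T.map (fun x => -x) with hT'
  set W : Multiset ℝ := pms W₀ M with hW
  have hT'eq : T' = pms Λ M' := by rw [hT', hM', hTeq, pms_map_neg_right]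
  have hWW : pms W₀ M' = W := by
    rw [hM', pms_map_neg_right, ← pms_map_neg_left, hW₀sym, hW]
  have E1 : T + t • M = s • M + W := by
    have h := congrArg (fun z => pms z M) hroots
    simp only [pms_add, pms_replicate_one] at h
    rw [hTeq, hW]
    exact h
  have E2 : T' + t • M' = s • M' + W := by
    have h := congrArg (fun z => pms z M') hroots
    simp only [pms_add, pms_replicate_one] at h
    rw [hT'eq, ← hWW]
    exact h
  have hcore := my_core s t M M' T T' W E1 E2
  rw [equivA, hcore]
  constructor
  · rintro (h | h)
    · exact Or.inl (by omega)
    · exact Or.inr (equivB.mpr h)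
  · rintro (h | h)
    · exact Or.inl (by omega)
    · exact Or.inr (equivB.mp h)
end

section
/- Let A be a signed adjacency matrix of order n, let c ≥ 0 be a real number, and let k ≥ 1 be an integer such that at least k of the n eigenvalues of A, counted with multiplicity, are ≥ c (i.e., the sum over eigenvalues λ ≥ c of dim ker(A − λ·I) is at least k). Then for every subset S of the indices {1,…,n} with |S| = n − k + 1, there exists u ∈ S such that #{v ∈ S : A_{uv} ≠ 0} ≥ ⌈c⌉; that is, the maximum degree of the induced subgraph on S is at least ⌈c⌉. -/
/-!
The span of the eigenvectors of `A` with eigenvalue `≥ c` has dimension at least `k`, and the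
vectors supported on `S` form a subspace of dimension `n - k + 1`, so the two share a nonzero
vector `x`. Expanding in the eigenbasis gives `c ‖x‖² ≤ xᵀ A x`. On the other hand, as
`|A u v| ≤ 1`, AM–GM bounds each term `A u v x_u x_v` by `(x_u² + x_v²) / 2` over the edges of
the graph induced on `S`, and symmetrizing gives `xᵀ A x ≤ Δ ‖x‖²` for the maximum degree `Δ`.
-/

open Matrix Module Submodule Finset
open scoped RealInnerProductSpace

theorem Submodule.exists_mem_inf_ne_zero_of_finrank_lt {K V : Type*} [DivisionRing K]
    [AddCommGroup V] [Module K V] [FiniteDimensional K V] {s t : Submodule K V}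
    (h : finrank K V < finrank K s + finrank K t) : ∃ x ∈ s ⊓ t, x ≠ 0 := by
  apply exists_mem_ne_zero_of_ne_bot
  rw [Ne, ← finrank_eq_zero]
  have := finrank_sup_add_finrank_inf_eq s t
  have := finrank_le (s ⊔ t)
  omega

theorem Module.Basis.finrank_span_image_finset {ι K V : Type*} [DivisionRing K] [AddCommGroup V]
    [Module K V] (b : Basis ι K V) (s : Finset ι) :
    finrank K (span K (b '' s)) = #s := by
  rw [Set.image_eq_range]
  exact (finrank_span_eq_card (b.linearIndependent.comp _ Subtype.val_injective)).trans (by simp)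

theorem Module.Basis.repr_eq_zero_of_mem_span_image {ι R M : Type*} [Semiring R] [AddCommMonoid M]
    [Module R M] (b : Basis ι R M) {s : Set ι} {x : M} (hx : x ∈ span R (b '' s)) {i : ι}
    (hi : i ∉ s) : b.repr x i = 0 :=
  Finsupp.notMem_support_iff.mp fun h => hi (b.mem_span_image.mp hx h)

section

variable {ι E : Type*} [Fintype ι] [NormedAddCommGroup E] [InnerProductSpace ℝ E]

theorem OrthonormalBasis.inner_map_self_eq_sum {b : OrthonormalBasis ι ℝ E} {T : E →ₗ[ℝ] E}
    {μ : ι → ℝ} (hT : ∀ i, T (b i) = μ i • b i) (x : E) :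
    ⟪x, T x⟫ = ∑ i, μ i * b.repr x i ^ 2 := by
  have hTx : T x = ∑ i, (μ i * b.repr x i) • b i := by
    conv_lhs => rw [← b.sum_repr x]
    simp only [map_sum, map_smul, hT, smul_smul, mul_comm]
  simp only [hTx, inner_sum, real_inner_smul_right]
  exact sum_congr rfl fun i _ => by rw [real_inner_comm, ← b.repr_apply_apply]; ring

theorem OrthonormalBasis.mul_norm_sq_le_inner_map_self {b : OrthonormalBasis ι ℝ E}
    {T : E →ₗ[ℝ] E} {μ : ι → ℝ} (hT : ∀ i, T (b i) = μ i • b i) {c : ℝ} {x : E}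
    {s : Set ι} (hx : x ∈ span ℝ (b '' s)) (hs : ∀ i ∈ s, c ≤ μ i) : c * ‖x‖ ^ 2 ≤ ⟪x, T x⟫ := by
  rw [OrthonormalBasis.inner_map_self_eq_sum hT, ← b.repr.norm_map, EuclideanSpace.norm_sq_eq, mul_sum]
  refine sum_le_sum fun i _ => ?_
  by_cases hi : i ∈ s
  · simp only [Real.norm_eq_abs, sq_abs]; gcongr; exact hs i hi
  · have := b.toBasis.repr_eq_zero_of_mem_span_image (by simpa using hx) hi
    simp_all
end

theorem Matrix.dotProduct_mulVec_self_le_of_degree_le {ι : Type*} [Fintype ι]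
    {A : Matrix ι ι ℝ} (hA : A.IsSymm) (hA1 : ∀ u v, |A u v| ≤ 1) {S : Finset ι} {d : ℝ}
    (hd : ∀ u ∈ S, (#{v ∈ S | A u v ≠ 0} : ℝ) ≤ d) {x : ι → ℝ} (hx : ∀ i ∉ S, x i = 0) :
    x ⬝ᵥ A *ᵥ x ≤ d * (x ⬝ᵥ x) := by
  have restrict : ∀ f : ι → ℝ, ∑ u, f u * x u = ∑ u ∈ S, f u * x u := fun f =>
    (sum_subset (subset_univ S) fun u _ hu => by simp [hx u hu]).symm
  have amgm : ∀ u v, A u v * (x u * x v) ≤ if A u v ≠ 0 then (x u ^ 2 + x v ^ 2) / 2 else 0 := by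
    intro u v
    split_ifs with h
    · calc A u v * (x u * x v) ≤ |A u v| * (|x u| * |x v|) := by
            rw [← abs_mul, ← abs_mul]; exact le_abs_self _
        _ ≤ 1 * (|x u| * |x v|) := by gcongr; exact hA1 u v
        _ ≤ (x u ^ 2 + x v ^ 2) / 2 := by
            nlinarith [two_mul_le_add_sq |x u| |x v|, sq_abs (x u), sq_abs (x v)]
    · simp_all
  have swap : ∑ u ∈ S, ∑ v ∈ S, (if A u v ≠ 0 then x v ^ 2 else 0) =
      ∑ u ∈ S, ∑ v ∈ S, (if A u v ≠ 0 then x u ^ 2 else 0) := by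
    rw [sum_comm]
    simp only [hA.apply]
  calc x ⬝ᵥ A *ᵥ x = ∑ u ∈ S, ∑ v ∈ S, A u v * (x u * x v) := by
        rw [dotProduct_comm, dotProduct, restrict]
        simp only [mulVec, dotProduct, restrict, sum_mul]
        exact sum_congr rfl fun u _ => sum_congr rfl fun v _ => by ring
    _ ≤ ∑ u ∈ S, ∑ v ∈ S, if A u v ≠ 0 then (x u ^ 2 + x v ^ 2) / 2 else 0 := by
        gcongr with u _ v _; exact amgm u v
    _ = ∑ u ∈ S, ∑ v ∈ S, if A u v ≠ 0 then x u ^ 2 else 0 := by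
        have halve : ∀ u v, (if A u v ≠ 0 then (x u ^ 2 + x v ^ 2) / 2 else 0) =
            ((if A u v ≠ 0 then x u ^ 2 else 0) + (if A u v ≠ 0 then x v ^ 2 else 0)) / 2 := by
          intro u v; split_ifs <;> ring
        simp only [halve, ← sum_div, sum_add_distrib, swap]
        ring
    _ = ∑ u ∈ S, (#{v ∈ S | A u v ≠ 0} : ℝ) * x u ^ 2 := by
        simp only [← sum_filter, sum_const, nsmul_eq_mul]
    _ ≤ ∑ u ∈ S, d * x u ^ 2 := by
        gcongr with u hu; exact hd u hu
    _ = d * (x ⬝ᵥ x) := by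
        rw [← mul_sum, dotProduct, restrict]; simp only [sq]

theorem induced_subgraph_max_degree_of_eigenvalues_general (n k : ℕ)
    (c : ℝ)
    (A : Matrix (Fin n) (Fin n) ℝ)
    (hAent : ∀ i j, A i j = -1 ∨ A i j = 0 ∨ A i j = 1)
    (hA : A.IsHermitian)
    (hcount : k ≤ (Finset.univ.filter (fun i => c ≤ hA.eigenvalues i)).card)
    (S : Finset (Fin n)) (hS : S.card = n - k + 1) :
    ∃ u ∈ S, ⌈c⌉₊ ≤ (S.filter (fun v => A u v ≠ 0)).card := by
  obtain ⟨u, hu, hmax⟩ := S.exists_max_image (fun u => #{v ∈ S | A u v ≠ 0})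
    (card_pos.mp (by omega))
  refine ⟨u, hu, Nat.ceil_le.mpr ?_⟩
  set T := univ.filter fun i => c ≤ hA.eigenvalues i
  have hTn : #T ≤ n := (card_filter_le _ _).trans (by simp)
  obtain ⟨x, ⟨hxT, hxS⟩, hx0⟩ := exists_mem_inf_ne_zero_of_finrank_lt
    (s := span ℝ (hA.eigenvectorBasis.toBasis '' T))
    (t := span ℝ ((EuclideanSpace.basisFun (Fin n) ℝ).toBasis '' S)) (by
      rw [Basis.finrank_span_image_finset, Basis.finrank_span_image_finset, finrank_euclideanSpace,
        Fintype.card_fin]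
      omega)
  have lower := hA.eigenvectorBasis.mul_norm_sq_le_inner_map_self (T := toLpLin 2 2 A)
    (fun i => by ext j; simpa using congrFun (hA.mulVec_eigenvectorBasis i) j)
    (by simpa using hxT) (fun i hi => by simpa [T] using hi)
  have upper := dotProduct_mulVec_self_le_of_degree_le (isHermitian_iff_isSymm.mp hA)
    (fun i j => by rcases hAent i j with h | h | h <;> simp [h]) (d := #{v ∈ S | A u v ≠ 0})
    (fun v hv => by exact_mod_cast hmax v hv) (x := x.ofLp)
    (fun i hi => by simpa using Basis.repr_eq_zero_of_mem_span_image _ hxS hi)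
  refine le_of_mul_le_mul_right ?_ (pow_pos (norm_pos_iff.mpr hx0) 2)
  calc c * ‖x‖ ^ 2 ≤ ⟪x, toLpLin 2 2 A x⟫ := lower
    _ = x.ofLp ⬝ᵥ A *ᵥ x.ofLp := by simp [EuclideanSpace.inner_eq_star_dotProduct, dotProduct_comm]
    _ ≤ _ * (x.ofLp ⬝ᵥ x.ofLp) := upper
    _ = _ * ‖x‖ ^ 2 := by
      rw [← real_inner_self_eq_norm_sq, EuclideanSpace.inner_eq_star_dotProduct, star_trivial]

/-- Let `A` be a signed adjacency matrix of order `n`, `c ≥ 0`, and `k ≥ 1` such that at least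
`k` of the `n` eigenvalues of `A` (counted with multiplicity) are `≥ c`.  Then every
`(n − k + 1)`-vertex induced subgraph of the underlying graph of `A` has maximum degree at
least `⌈c⌉`. -/
theorem induced_subgraph_max_degree_of_eigenvalues (n k : ℕ) (hk : 1 ≤ k)
    (c : ℝ) (hc : 0 ≤ c)
    (A : Matrix (Fin n) (Fin n) ℝ)
    (hAdiag : ∀ i, A i i = 0)
    (hAent : ∀ i j, A i j = -1 ∨ A i j = 0 ∨ A i j = 1)
    (hA : A.IsHermitian)
    (hcount : k ≤ (Finset.univ.filter (fun i => c ≤ hA.eigenvalues i)).card)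
    (S : Finset (Fin n)) (hS : S.card = n - k + 1) :
    ∃ u ∈ S, ⌈c⌉₊ ≤ (S.filter (fun v => A u v ≠ 0)).card :=
  induced_subgraph_max_degree_of_eigenvalues_general n k c A hAent hA hcount S hS
end

section
/- Let Δ₁, Δ₂ ≥ 1 be real numbers. Let A₁ be an n×n signed bipartite adjacency matrix with parts of sizes s and n−s such that every eigenvalue μ of A₁ satisfies |μ| ≤ 2√(Δ₁ − 1), and let A₂ be an m×m signed adjacency matrix such that every eigenvalue μ of A₂ satisfies |μ| ≤ 2√(Δ₂ − 1). Let 𝒜 = A₁⊗I_m + D⊗A₂ be the signed Cartesian product matrix, where D = diag(I_s, −I_{n−s}). Then every eigenvalue ν of 𝒜 satisfies |ν| ≤ 2√(Δ₁ + Δ₂ − 2); i.e., the spectral radius of the signed Cartesian product is at most 2√(Δ₁+Δ₂−2). -/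
/-!
Because `D² = 1` and `D` anticommutes with the bipartite matrix `A₁`, the cross terms cancel
in `𝒜² = (A₁ ⊗ I + D ⊗ A₂)²`, leaving `𝒜² = A₁² ⊗ I + I ⊗ A₂²`. For a symmetric matrix `M`
whose eigenvalues are bounded by `c` in absolute value, `xᵀ M² x ≤ c² xᵀ x` (expand `x` in an
orthonormal eigenbasis), and tensoring with an identity preserves this bound slice by slice.
So an eigenpair `(ν, x)` of `𝒜` gives `ν² ≤ 4(Δ₁ - 1) + 4(Δ₂ - 1)`.
-/

open Matrix Kronecker

namespace LinearMap.IsSymmetric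

variable {E : Type*} [NormedAddCommGroup E] [InnerProductSpace ℝ E] [FiniteDimensional ℝ E]
  {T : E →ₗ[ℝ] E}

theorem norm_apply_sq_le (hT : T.IsSymmetric) {c : ℝ}
    (hc : ∀ μ, Module.End.HasEigenvalue T μ → |μ| ≤ c) (x : E) :
    ‖T x‖ ^ 2 ≤ c ^ 2 * ‖x‖ ^ 2 := by
  set b := hT.eigenvectorBasis rfl
  have hnorm (y : E) : ‖y‖ ^ 2 = ∑ i, b.repr y i ^ 2 := by
    rw [← b.repr.norm_map, EuclideanSpace.norm_sq_eq]
    simp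
  rw [hnorm, hnorm, Finset.mul_sum]
  refine Finset.sum_le_sum fun i _ => ?_
  rw [hT.eigenvectorBasis_apply_self_apply, mul_pow]
  have hμ := hc _ (hT.hasEigenvalue_eigenvalues rfl i)
  exact mul_le_mul_of_nonneg_right (sq_le_sq.2 (hμ.trans (le_abs_self c))) (sq_nonneg _)

end LinearMap.IsSymmetric

theorem Matrix.IsSymm.dotProduct_mul_self_mulVec_le {n : Type*} [Fintype n] [DecidableEq n]
    {M : Matrix n n ℝ} (hM : M.IsSymm) {c : ℝ}
    (hc : ∀ (μ : ℝ) (v : n → ℝ), v ≠ 0 → M *ᵥ v = μ • v → |μ| ≤ c) (x : n → ℝ) :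
    x ⬝ᵥ (M * M) *ᵥ x ≤ c ^ 2 * (x ⬝ᵥ x) := by
  have hT : (toEuclideanLin M).IsSymmetric :=
    isSymmetric_toEuclideanLin_iff.2 (isHermitian_iff_isSymm.2 hM)
  have hcT : ∀ μ, Module.End.HasEigenvalue (toEuclideanLin M) μ → |μ| ≤ c := by
    intro μ hμ
    obtain ⟨v, hv⟩ := hμ.exists_hasEigenvector
    refine hc μ v.ofLp (by simpa using hv.2) ?_
    simpa using congrArg WithLp.ofLp (Module.End.mem_eigenspace_iff.1 hv.1)
  have hnorm (y : n → ℝ) : ‖WithLp.toLp 2 y‖ ^ 2 = y ⬝ᵥ y := by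
    rw [← real_inner_self_eq_norm_sq, EuclideanSpace.inner_eq_star_dotProduct]
    simp
  calc x ⬝ᵥ (M * M) *ᵥ x = M *ᵥ x ⬝ᵥ M *ᵥ x := by
        rw [← mulVec_mulVec, dotProduct_mulVec, ← mulVec_transpose, hM.eq]
    _ ≤ c ^ 2 * (x ⬝ᵥ x) := by
        simpa only [toLpLin_toLp, toLin'_apply, hnorm] using
          hT.norm_apply_sq_le hcT (WithLp.toLp 2 x)

namespace Matrix

variable {α β R : Type*} [Fintype α] [Fintype β]

section CommRing

variable [CommRing R]

theorem kronecker_one_mulVec_apply [DecidableEq β] (K : Matrix α α R) (x : α × β → R)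
    (i : α) (j : β) : ((K ⊗ₖ 1) *ᵥ x) (i, j) = (K *ᵥ fun i' => x (i', j)) i := by
  simp [mulVec, dotProduct, Fintype.sum_prod_type, one_apply]

theorem one_kronecker_mulVec_apply [DecidableEq α] (N : Matrix β β R) (x : α × β → R)
    (i : α) (j : β) : ((1 ⊗ₖ N) *ᵥ x) (i, j) = (N *ᵥ fun j' => x (i, j')) j := by
  simp [mulVec, dotProduct, Fintype.sum_prod_type, one_apply]

variable [PartialOrder R] [IsOrderedRing R] {C : R}

theorem dotProduct_kronecker_one_mulVec_le [DecidableEq β] {K : Matrix α α R}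
    (hK : ∀ y, y ⬝ᵥ K *ᵥ y ≤ C * (y ⬝ᵥ y)) (x : α × β → R) :
    x ⬝ᵥ (K ⊗ₖ 1) *ᵥ x ≤ C * (x ⬝ᵥ x) :=
  calc x ⬝ᵥ (K ⊗ₖ 1) *ᵥ x = ∑ j, (fun i => x (i, j)) ⬝ᵥ K *ᵥ fun i => x (i, j) := by
        simp only [dotProduct, Fintype.sum_prod_type, kronecker_one_mulVec_apply]
        exact Finset.sum_comm
    _ ≤ ∑ j, C * ((fun i => x (i, j)) ⬝ᵥ fun i => x (i, j)) :=
        Finset.sum_le_sum fun j _ => hK _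
    _ = C * (x ⬝ᵥ x) := by
        simp only [dotProduct, Fintype.sum_prod_type, Finset.mul_sum]
        exact Finset.sum_comm

theorem dotProduct_one_kronecker_mulVec_le [DecidableEq α] {N : Matrix β β R}
    (hN : ∀ y, y ⬝ᵥ N *ᵥ y ≤ C * (y ⬝ᵥ y)) (x : α × β → R) :
    x ⬝ᵥ (1 ⊗ₖ N) *ᵥ x ≤ C * (x ⬝ᵥ x) :=
  calc x ⬝ᵥ (1 ⊗ₖ N) *ᵥ x = ∑ i, (fun j => x (i, j)) ⬝ᵥ N *ᵥ fun j => x (i, j) := by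
        simp only [dotProduct, Fintype.sum_prod_type, one_kronecker_mulVec_apply]
    _ ≤ ∑ i, C * ((fun j => x (i, j)) ⬝ᵥ fun j => x (i, j)) :=
        Finset.sum_le_sum fun i _ => hN _
    _ = C * (x ⬝ᵥ x) := by
        simp only [dotProduct, Fintype.sum_prod_type, Finset.mul_sum]

end CommRing

theorem kronecker_one_add_kronecker_mul_self [CommRing R] [DecidableEq α] [DecidableEq β]
    {A D : Matrix α α R} (B : Matrix β β R) (hD : D * D = 1) (hAD : A * D + D * A = 0) :
    (A ⊗ₖ 1 + D ⊗ₖ B) * (A ⊗ₖ 1 + D ⊗ₖ B) = (A * A) ⊗ₖ 1 + 1 ⊗ₖ (B * B) := by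
  have hcross : (A * D) ⊗ₖ B + (D * A) ⊗ₖ B = 0 := by rw [← add_kronecker, hAD, zero_kronecker]
  simp only [add_mul, mul_add, ← mul_kronecker_mul, Matrix.one_mul, Matrix.mul_one, hD]
  rw [← sub_eq_zero, ← hcross]
  abel

section Blocks

variable {m n : Type*} [Fintype m] [Fintype n] [DecidableEq m] [DecidableEq n] [Ring R]

theorem fromBlocks_one_neg_one_mul_self :
    (fromBlocks 1 0 0 (-1) * fromBlocks 1 0 0 (-1) : Matrix (m ⊕ n) (m ⊕ n) R) = 1 := by
  simp [fromBlocks_multiply]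

theorem fromBlocks_zero_anticomm_fromBlocks_one_neg_one (P : Matrix m n R) (Q : Matrix n m R) :
    fromBlocks 0 P Q 0 * fromBlocks 1 0 0 (-1) + fromBlocks 1 0 0 (-1) * fromBlocks 0 P Q 0 =
      0 := by
  simp [fromBlocks_multiply, fromBlocks_add]

end Blocks

end Matrix

theorem signed_cartesian_product_spectral_radius_general (s t m : ℕ)
    (Δ₁ Δ₂ : ℝ) (hΔ₁ : 1 ≤ Δ₁) (hΔ₂ : 1 ≤ Δ₂)
    (P : Matrix (Fin s) (Fin t) ℝ)
    (A₂ : Matrix (Fin m) (Fin m) ℝ)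
    (hA₂symm : A₂.IsSymm)
    (A₁ : Matrix (Fin s ⊕ Fin t) (Fin s ⊕ Fin t) ℝ)
    (hA₁ : A₁ = Matrix.fromBlocks 0 P Pᵀ 0)
    (D : Matrix (Fin s ⊕ Fin t) (Fin s ⊕ Fin t) ℝ)
    (hD : D = Matrix.fromBlocks 1 0 0 (-1))
    (𝒜 : Matrix ((Fin s ⊕ Fin t) × Fin m) ((Fin s ⊕ Fin t) × Fin m) ℝ)
    (h𝒜 : 𝒜 = A₁ ⊗ₖ (1 : Matrix (Fin m) (Fin m) ℝ) + D ⊗ₖ A₂)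
    (h₁ : ∀ (μ : ℝ) (x : Fin s ⊕ Fin t → ℝ), x ≠ 0 → A₁.mulVec x = μ • x →
      |μ| ≤ 2 * Real.sqrt (Δ₁ - 1))
    (h₂ : ∀ (μ : ℝ) (x : Fin m → ℝ), x ≠ 0 → A₂.mulVec x = μ • x →
      |μ| ≤ 2 * Real.sqrt (Δ₂ - 1)) :
    ∀ (ν : ℝ) (x : (Fin s ⊕ Fin t) × Fin m → ℝ), x ≠ 0 → 𝒜.mulVec x = ν • x →
      |ν| ≤ 2 * Real.sqrt (Δ₁ + Δ₂ - 2) := by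
  intro ν x hx hν
  have hA₁symm : A₁.IsSymm := hA₁ ▸ IsSymm.fromBlocks (by simp) rfl (by simp)
  have hsq : 𝒜 * 𝒜 = (A₁ * A₁) ⊗ₖ 1 + 1 ⊗ₖ (A₂ * A₂) := by
    subst hA₁ hD h𝒜
    exact kronecker_one_add_kronecker_mul_self A₂ fromBlocks_one_neg_one_mul_self
      (fromBlocks_zero_anticomm_fromBlocks_one_neg_one P Pᵀ)
  have hquad : x ⬝ᵥ (𝒜 * 𝒜) *ᵥ x = ν ^ 2 * (x ⬝ᵥ x) := by
    rw [← mulVec_mulVec, hν, mulVec_smul, hν, smul_smul, dotProduct_smul, smul_eq_mul, sq]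
  have hbound : ν ^ 2 * (x ⬝ᵥ x) ≤ ((2 * √(Δ₁ - 1)) ^ 2 + (2 * √(Δ₂ - 1)) ^ 2) * (x ⬝ᵥ x) := by
    rw [← hquad, hsq, add_mulVec, dotProduct_add, add_mul]
    exact add_le_add
      (dotProduct_kronecker_one_mulVec_le (hA₁symm.dotProduct_mul_self_mulVec_le h₁) x)
      (dotProduct_one_kronecker_mulVec_le (hA₂symm.dotProduct_mul_self_mulVec_le h₂) x)
  have hx_pos : 0 < x ⬝ᵥ x := by simpa using dotProduct_star_self_pos_iff.2 hx
  refine abs_le_of_sq_le_sq ((le_of_mul_le_mul_right hbound hx_pos).trans_eq ?_) (by positivity)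
  simp only [mul_pow, Real.sq_sqrt (sub_nonneg.2 hΔ₁), Real.sq_sqrt (sub_nonneg.2 hΔ₂),
    Real.sq_sqrt (by linarith : (0 : ℝ) ≤ Δ₁ + Δ₂ - 2)]
  ring

/-- If every eigenvalue of the signed bipartite adjacency matrix `A₁` has absolute value at
most `2√(Δ₁ − 1)` and every eigenvalue of the signed adjacency matrix `A₂` has absolute value
at most `2√(Δ₂ − 1)`, then every eigenvalue of the signed Cartesian product
`𝒜 = A₁ ⊗ I_m + D ⊗ A₂` has absolute value at most `2√(Δ₁ + Δ₂ − 2)`. -/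
theorem signed_cartesian_product_spectral_radius (s t m : ℕ)
    (Δ₁ Δ₂ : ℝ) (hΔ₁ : 1 ≤ Δ₁) (hΔ₂ : 1 ≤ Δ₂)
    (P : Matrix (Fin s) (Fin t) ℝ)
    (hP : ∀ i j, P i j = -1 ∨ P i j = 0 ∨ P i j = 1)
    (A₂ : Matrix (Fin m) (Fin m) ℝ)
    (hA₂symm : A₂.IsSymm) (hA₂diag : ∀ i, A₂ i i = 0)
    (hA₂ent : ∀ i j, A₂ i j = -1 ∨ A₂ i j = 0 ∨ A₂ i j = 1)
    (A₁ : Matrix (Fin s ⊕ Fin t) (Fin s ⊕ Fin t) ℝ)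
    (hA₁ : A₁ = Matrix.fromBlocks 0 P Pᵀ 0)
    (D : Matrix (Fin s ⊕ Fin t) (Fin s ⊕ Fin t) ℝ)
    (hD : D = Matrix.fromBlocks 1 0 0 (-1))
    (𝒜 : Matrix ((Fin s ⊕ Fin t) × Fin m) ((Fin s ⊕ Fin t) × Fin m) ℝ)
    (h𝒜 : 𝒜 = A₁ ⊗ₖ (1 : Matrix (Fin m) (Fin m) ℝ) + D ⊗ₖ A₂)
    (h₁ : ∀ (μ : ℝ) (x : Fin s ⊕ Fin t → ℝ), x ≠ 0 → A₁.mulVec x = μ • x →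
      |μ| ≤ 2 * Real.sqrt (Δ₁ - 1))
    (h₂ : ∀ (μ : ℝ) (x : Fin m → ℝ), x ≠ 0 → A₂.mulVec x = μ • x →
      |μ| ≤ 2 * Real.sqrt (Δ₂ - 1)) :
    ∀ (ν : ℝ) (x : (Fin s ⊕ Fin t) × Fin m → ℝ), x ≠ 0 → 𝒜.mulVec x = ν • x →
      |ν| ≤ 2 * Real.sqrt (Δ₁ + Δ₂ - 2) :=
  signed_cartesian_product_spectral_radius_general s t m Δ₁ Δ₂ hΔ₁ hΔ₂ P A₂ hA₂symm A₁ hA₁ D hD 𝒜 h𝒜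
    h₁ h₂
end
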